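/- Let K ⊂ ℝⁿ be a convex body in John's position in a convex body L with contact data (a_i, u_i, v_i)_{i=1}^m, and suppose L ⊂ −nK. If x ∈ ∂L satisfies ‖−x‖_K ≥ (1−ε₁)n for some 0 ≤ ε₁ < 1, then there exists an index i with ⟨x, v_i⟩ ≥ 1 − ε₁. -/

import Mathlib

/-!
Let `T` be the largest of the numbers `⟪x, v i⟫`. Transposing the decomposition of the identity
and using `∑ a i • u i = 0` writes `-x = ∑ a i (T - ⟪x, v i⟫) • u i`, a nonnegative combination of
contact points of `K` whose coefficients add up, by `∑ a i • v i = 0`, to `T ∑ a i = n T`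
(taking the trace of the decomposition gives `∑ a i = n`). Hence `‖-x‖_K ≤ n T`, and the lower
bound on `‖-x‖_K` forces `T ≥ 1 - ε₁`.
-/

open RealInnerProductSpace Pointwise

/-- The polar body of a set in Euclidean space. -/
def polarSet {n : ℕ} (M : Set (EuclideanSpace ℝ (Fin n))) : Set (EuclideanSpace ℝ (Fin n)) :=
  {x | ∀ y ∈ M, inner ℝ x y ≤ (1 : ℝ)}

section Gauge

variable {E ι : Type*} [AddCommGroup E] [Module ℝ E]

theorem gauge_sum_smul_le {K : Set E} (hK : Convex ℝ K) (s : Finset ι) {c : ι → ℝ}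
    (hc : ∀ i ∈ s, 0 ≤ c i) {u : ι → E} (hu : ∀ i ∈ s, u i ∈ K) :
    gauge K (∑ i ∈ s, c i • u i) ≤ ∑ i ∈ s, c i := by
  rcases (Finset.sum_nonneg hc).eq_or_lt with hzero | hpos
  · have hc0 : ∀ i ∈ s, c i = 0 := (Finset.sum_eq_zero_iff_of_nonneg hc).1 hzero.symm
    rw [← hzero, Finset.sum_eq_zero fun i hi => by rw [hc0 i hi, zero_smul], gauge_zero]
  · refine gauge_le_of_mem hpos.le ((Set.mem_smul_set_iff_inv_smul_mem₀ hpos.ne' _ _).2 ?_)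
    exact hK.centerMass_mem hc hpos hu

end Gauge

section Decomposition

variable {E ι : Type*} [NormedAddCommGroup E] [InnerProductSpace ℝ E] [Fintype ι]
  {a : ι → ℝ} {u v : ι → E}

theorem inner_eq_sum_mul_inner_mul_inner (hid : ∀ y, y = ∑ i, (a i * ⟪y, u i⟫) • v i)
    (y z : E) : ⟪y, z⟫ = ∑ i, a i * (⟪y, u i⟫ * ⟪v i, z⟫) := by
  conv_lhs => rw [hid y]
  simp only [sum_inner, real_inner_smul_left, mul_assoc]

theorem eq_sum_inner_smul_swap (hid : ∀ y, y = ∑ i, (a i * ⟪y, u i⟫) • v i) (z : E) :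
    z = ∑ i, (a i * ⟪z, v i⟫) • u i := by
  refine ext_inner_right ℝ fun y => ?_
  rw [real_inner_comm, inner_eq_sum_mul_inner_mul_inner hid, sum_inner]
  refine Finset.sum_congr rfl fun i _ => ?_
  rw [real_inner_smul_left, real_inner_comm (v i), real_inner_comm (u i)]
  ring

theorem sum_mul_inner_eq_finrank [FiniteDimensional ℝ E]
    (hid : ∀ y, y = ∑ i, (a i * ⟪y, u i⟫) • v i) :
    ∑ i, a i * ⟪u i, v i⟫ = Module.finrank ℝ E := by
  let b := stdOrthonormalBasis ℝ E
  calc ∑ i, a i * ⟪u i, v i⟫ = ∑ i, a i * ∑ j, ⟪u i, b j⟫ * ⟪b j, v i⟫ := by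
        simp only [b.sum_inner_mul_inner]
    _ = ∑ j, ∑ i, a i * (⟪b j, u i⟫ * ⟪v i, b j⟫) := by
        simp only [Finset.mul_sum]
        rw [Finset.sum_comm]
        refine Finset.sum_congr rfl fun j _ => Finset.sum_congr rfl fun i _ => ?_
        rw [real_inner_comm (b j) (u i), real_inner_comm (b j) (v i)]
    _ = ∑ j, ⟪b j, b j⟫ :=
        Finset.sum_congr rfl fun j _ => (inner_eq_sum_mul_inner_mul_inner hid _ _).symm
    _ = Module.finrank ℝ E := by
        simp [b.orthonormal.1]

theorem gauge_neg_le_mul_sum {K : Set E} (hK : Convex ℝ K) (huK : ∀ i, u i ∈ K)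
    (ha : ∀ i, 0 ≤ a i) (hid : ∀ y, y = ∑ i, (a i * ⟪y, u i⟫) • v i)
    (hu0 : ∑ i, a i • u i = 0) (hv0 : ∑ i, a i • v i = 0) {x : E} {T : ℝ}
    (hT : ∀ i, ⟪x, v i⟫ ≤ T) :
    gauge K (-x) ≤ T * ∑ i, a i := by
  have hxv : ∑ i, a i * ⟪x, v i⟫ = 0 := by
    simpa only [inner_sum, real_inner_smul_right, hv0, inner_zero_right]
      using (inner_sum (𝕜 := ℝ) Finset.univ (fun i => a i • v i) x).symm
  have hneg : -x = ∑ i, (a i * (T - ⟪x, v i⟫)) • u i := by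
    conv_lhs => rw [eq_sum_inner_smul_swap hid x]
    simp only [mul_sub, sub_smul, Finset.sum_sub_distrib, mul_comm (a _) T, mul_smul,
      ← Finset.smul_sum, hu0, smul_zero, zero_sub]
  have hcoeff : ∑ i, a i * (T - ⟪x, v i⟫) = T * ∑ i, a i := by
    simp only [mul_sub, Finset.sum_sub_distrib, hxv, sub_zero, Finset.mul_sum, mul_comm]
  rw [hneg, ← hcoeff]
  exact gauge_sum_smul_le hK _ (fun i _ => mul_nonneg (ha i) (sub_nonneg.2 (hT i)))
    fun i _ => huK i

end Decomposition

theorem exists_contact_functional_near_one_general {n m : ℕ} (hm : 0 < m)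
    (K L : Set (EuclideanSpace ℝ (Fin n)))
    (hKcomp : IsCompact K) (hKconv : Convex ℝ K)
    (a : Fin m → ℝ) (u v : Fin m → EuclideanSpace ℝ (Fin n))
    (ha : ∀ i, 0 < a i)
    (hu : ∀ i, u i ∈ frontier K ∩ frontier L)
    (huv : ∀ i, ⟪u i, v i⟫ = 1)
    (hid : ∀ y : EuclideanSpace ℝ (Fin n), y = ∑ i, (a i * ⟪y, u i⟫) • v i)
    (hu0 : ∑ i, a i • u i = 0) (hv0 : ∑ i, a i • v i = 0)
    (x : EuclideanSpace ℝ (Fin n))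
    (ε₁ : ℝ)
    (hxK : gauge K (-x) ≥ (1 - ε₁) * n) :
    ∃ i, ⟪x, v i⟫ ≥ 1 - ε₁ := by
  obtain ⟨i₀, -, hi₀⟩ := Finset.univ.exists_max_image (fun i => ⟪x, v i⟫)
    ⟨⟨0, hm⟩, Finset.mem_univ _⟩
  have hsum : ∑ i, a i = n := by
    simpa [huv, finrank_euclideanSpace_fin] using sum_mul_inner_eq_finrank hid
  have hn : (0 : ℝ) < n := hsum ▸ Finset.sum_pos (fun i _ => ha i) ⟨⟨0, hm⟩, Finset.mem_univ _⟩
  have hgauge : gauge K (-x) ≤ ⟪x, v i₀⟫ * n :=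
    hsum ▸ gauge_neg_le_mul_sum hKconv
      (fun i => hKcomp.isClosed.frontier_subset (hu i).1) (fun i => (ha i).le) hid hu0 hv0
      fun i => hi₀ i (Finset.mem_univ i)
  exact ⟨i₀, le_of_mul_le_mul_right (hxK.trans hgauge) hn⟩

theorem exists_contact_functional_near_one {n m : ℕ} (hm : 0 < m)
    (K L : Set (EuclideanSpace ℝ (Fin n)))
    (hKcomp : IsCompact K) (hKconv : Convex ℝ K) (h0K : 0 ∈ interior K)
    (hLcomp : IsCompact L) (hLconv : Convex ℝ L) (h0L : 0 ∈ interior L)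
    (hKL : K ⊆ L)
    (a : Fin m → ℝ) (u v : Fin m → EuclideanSpace ℝ (Fin n))
    (ha : ∀ i, 0 < a i)
    (hu : ∀ i, u i ∈ frontier K ∩ frontier L)
    (hv : ∀ i, v i ∈ frontier (polarSet K) ∩ frontier (polarSet L))
    (huv : ∀ i, ⟪u i, v i⟫ = 1)
    (hid : ∀ y : EuclideanSpace ℝ (Fin n), y = ∑ i, (a i * ⟪y, u i⟫) • v i)
    (hu0 : ∑ i, a i • u i = 0) (hv0 : ∑ i, a i • v i = 0)
    (hLnK : L ⊆ (-(n : ℝ)) • K)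
    (x : EuclideanSpace ℝ (Fin n)) (hx : x ∈ frontier L)
    (ε₁ : ℝ) (hε0 : 0 ≤ ε₁) (hε1 : ε₁ < 1)
    (hxK : gauge K (-x) ≥ (1 - ε₁) * n) :
    ∃ i, ⟪x, v i⟫ ≥ 1 - ε₁ :=
  exists_contact_functional_near_one_general hm K L hKcomp hKconv a u v ha hu huv hid hu0 hv0 x ε₁
    hxK
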